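/- arXiv:2305.07229 — 4 statements merged into one kernel-verified Lean document; each statement's English description precedes it below -/
import Mathlib

section
/- In the sequential execution of blocks on an initially empty FIFO queue (enqueues of each block before its dequeues), if the i-th dequeue of block b is non-null, then it returns the value of the e-th enqueue overall, where e = i + sumEnq(b−1) − size(b−1), sumEnq(b−1) is the total number of enqueues in blocks 1..b−1, and size is given by the recurrence size(b) = max(0, size(b−1) + numEnq(b) − numDeq(b)). -/
/-!
Enqueues append the next ranks at the back and dequeues drop from the front, so after blocks
`1..b` the queue is the interval of ranks `sumEnq b - queueSize b + 1, …, sumEnq b`, where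
`queueSize` is the size recurrence over `ℕ`. Appending the enqueues of block `b` keeps it an
interval, so the `i`-th dequeue of block `b` reads `sumEnq (b-1) - size (b-1) + i`.
-/
/-- Dequeue: remove the oldest element if nonempty; a null dequeue leaves the queue
unchanged. -/
def deqN : List ℕ → List ℕ
  | [] => []
  | _ :: t => t

/-- Total number of enqueues in blocks `1..b`. -/
def sumEnq (nE : ℕ → ℕ) (b : ℕ) : ℕ := ∑ j ∈ Finset.Icc 1 b, nE j

/-- Perform the enqueues of block `b`; the enqueues are labelled by their global
rank, i.e. the `k`-th enqueue of block `b` enqueues the value `sumEnq (b-1) + k`. -/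
def pushBlock (nE : ℕ → ℕ) (b : ℕ) (q : List ℕ) : List ℕ :=
  q ++ (List.range (nE b)).map (fun k => sumEnq nE (b - 1) + 1 + k)

/-- Execute blocks `1..b` in order on an initially empty FIFO queue; within block
`b`, its enqueues occur first, then its dequeues. -/
def runBlocksN (nE nD : ℕ → ℕ) : ℕ → List ℕ
  | 0 => []
  | b + 1 => deqN^[nD (b + 1)] (pushBlock nE (b + 1) (runBlocksN nE nD b))

/-- Truncated subtraction plays the role of `max 0` in the size recurrence. -/
def queueSize (nE nD : ℕ → ℕ) : ℕ → ℕ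
  | 0 => 0
  | b + 1 => queueSize nE nD b + nE (b + 1) - nD (b + 1)

theorem deqN_eq_tail (l : List ℕ) : deqN l = l.tail := by
  cases l <;> rfl

theorem deqN_iterate (d : ℕ) (l : List ℕ) : deqN^[d] l = l.drop d := by
  induction d generalizing l with
  | zero => rfl
  | succ d ih =>
    rw [Function.iterate_succ_apply', ih, deqN_eq_tail, List.tail_drop]

theorem sumEnq_succ (nE : ℕ → ℕ) (b : ℕ) : sumEnq nE (b + 1) = sumEnq nE b + nE (b + 1) :=
  Finset.sum_Icc_succ_top (by omega) nE

theorem pushBlock_eq_append_range' (nE : ℕ → ℕ) (b : ℕ) (q : List ℕ) :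
    pushBlock nE b q = q ++ List.range' (sumEnq nE (b - 1) + 1) (nE b) := by
  rw [pushBlock, List.range'_eq_map_range]

theorem queueSize_le_sumEnq (nE nD : ℕ → ℕ) (b : ℕ) : queueSize nE nD b ≤ sumEnq nE b := by
  induction b with
  | zero => exact le_rfl
  | succ b ih =>
    rw [queueSize, sumEnq_succ]
    omega

section Invariant

variable (nE nD : ℕ → ℕ)

theorem range'_queueSize_append (b n : ℕ) :
    List.range' (sumEnq nE b - queueSize nE nD b + 1) (queueSize nE nD b) ++
        List.range' (sumEnq nE b + 1) n =
      List.range' (sumEnq nE b - queueSize nE nD b + 1) (queueSize nE nD b + n) := by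
  have hle := queueSize_le_sumEnq nE nD b
  rw [← List.range'_append]
  congr 2
  omega

theorem runBlocksN_eq_range' (b : ℕ) :
    runBlocksN nE nD b =
      List.range' (sumEnq nE b - queueSize nE nD b + 1) (queueSize nE nD b) := by
  induction b with
  | zero => rfl
  | succ b ih =>
    have hle := queueSize_le_sumEnq nE nD b
    rw [runBlocksN, deqN_iterate, pushBlock_eq_append_range', Nat.add_sub_cancel, ih,
      range'_queueSize_append, List.drop_range', sumEnq_succ]
    simp only [queueSize, Nat.mul_one]
    rcases Nat.eq_zero_or_pos (queueSize nE nD b + nE (b + 1) - nD (b + 1)) with hnil | hpos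
    · rw [hnil, List.range'_zero, List.range'_zero]
    · congr 1
      omega

end Invariant

theorem size_eq_queueSize {nE nD : ℕ → ℕ} {size : ℕ → ℤ} (h0 : size 0 = 0)
    (hrec : ∀ b, size (b + 1) = max 0 (size b + (nE (b + 1) : ℤ) - (nD (b + 1) : ℤ)))
    (b : ℕ) : size b = queueSize nE nD b := by
  induction b with
  | zero => exact h0
  | succ b ih =>
    rw [hrec, ih, queueSize]
    omega

theorem nonnull_dequeue_value_general (nE nD : ℕ → ℕ) (size : ℕ → ℤ)
    (h0 : size 0 = 0)
    (hrec : ∀ b, size (b + 1) =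
      max 0 (size b + (nE (b + 1) : ℤ) - (nD (b + 1) : ℤ)))
    (b i : ℕ) (hi : 1 ≤ i)
    (hnonnull : deqN^[i - 1] (pushBlock nE b (runBlocksN nE nD (b - 1))) ≠ []) :
    ∃ m, (deqN^[i - 1] (pushBlock nE b (runBlocksN nE nD (b - 1)))).head? = some m ∧
      (m : ℤ) = (i : ℤ) + (sumEnq nE (b - 1) : ℤ) - size (b - 1) := by
  rw [pushBlock_eq_append_range', runBlocksN_eq_range', range'_queueSize_append,
    deqN_iterate] at hnonnull ⊢
  have hlt : i - 1 < queueSize nE nD (b - 1) + nE b := by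
    rwa [Ne, List.drop_eq_nil_iff, List.length_range', not_le] at hnonnull
  refine ⟨_, by rw [List.head?_drop, List.getElem?_range' hlt], ?_⟩
  have hle := queueSize_le_sumEnq nE nD (b - 1)
  rw [size_eq_queueSize h0 hrec]
  push_cast [hle]
  omega

/-- If the `i`-th dequeue of block `b` is non-null (the queue is nonempty when it
executes), then it returns the value of the `e`-th enqueue overall, where
`e = i + sumEnq (b-1) - size (b-1)` and `size` satisfies the queue-size
recurrence. -/
theorem nonnull_dequeue_value (nE nD : ℕ → ℕ) (size : ℕ → ℤ)
    (h0 : size 0 = 0)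
    (hrec : ∀ b, size (b + 1) =
      max 0 (size b + (nE (b + 1) : ℤ) - (nD (b + 1) : ℤ)))
    (b i : ℕ) (hb : 1 ≤ b) (hi : 1 ≤ i) (hin : i ≤ nD b)
    (hnonnull : deqN^[i - 1] (pushBlock nE b (runBlocksN nE nD (b - 1))) ≠ []) :
    ∃ m, (deqN^[i - 1] (pushBlock nE b (runBlocksN nE nD (b - 1)))).head? = some m ∧
      (m : ℤ) = (i : ℤ) + (sumEnq nE (b - 1) : ℤ) - size (b - 1) :=
  nonnull_dequeue_value_general nE nD size h0 hrec b i hi hnonnull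
end

section
/- Invariant: at all times, for a node v with array blocks and counter head, blocks[i] ≠ null for all 0 ≤ i < head, and blocks[i] = null for all i > head. This invariant is preserved by the two permitted kinds of steps: (1) a CAS that sets blocks[h] from null to non-null only when h was previously read from head, and (2) a CAS incrementing head from h to h+1 only after blocks[h] has been verified non-null. -/
/-- State of a node: the `blocks` array and the `head` counter. -/
abbrev NodeState := (ℕ → Option Unit) × ℕ

/-- Initial state: `blocks[0]` holds the dummy block, all other slots are null, and
`head = 1`. -/
def initState : NodeState := (fun i => if i = 0 then some () else none, 1)

/-- The two permitted kinds of steps: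
(1) a CAS installing a block in `blocks[h]` from null to non-null, where `h` was
previously read from `head` (hence `h ≤ head` by monotonicity of `head`);
(2) a CAS incrementing `head` from `h` to `h + 1`, after `blocks[h]` has been
verified non-null (the CAS succeeds only when `head = h`). -/
inductive NodeStep : NodeState → NodeState → Prop
  | install (s : NodeState) (h : ℕ) (hread : h ≤ s.2) (hnull : s.1 h = none) :
      NodeStep s (Function.update s.1 h (some ()), s.2)
  | advance (s : NodeState) (hfilled : s.1 s.2 ≠ none) :
      NodeStep s (s.1, s.2 + 1)

/-- Invariant 4.3 (first two claims): in every reachable state,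
`blocks[i] ≠ null` for `0 ≤ i < head` and `blocks[i] = null` for `i > head`. -/
theorem head_position_invariant (s : NodeState)
    (hreach : Relation.ReflTransGen NodeStep initState s) :
    (∀ i, i < s.2 → s.1 i ≠ none) ∧ (∀ i, s.2 < i → s.1 i = none) := by
  induction hreach with
  | refl =>
      refine ⟨fun i hi => ?_, fun i hi => ?_⟩
      · simp only [initState] at hi ⊢
        interval_cases i
        simp
      · simp only [initState] at hi ⊢
        rw [if_neg (by omega)]
  | @tail b c hab hstep ih =>
      obtain ⟨ih1, ih2⟩ := ih
      cases hstep with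
      | install h hread hnull =>
          have hh : h = b.2 := by
            rcases lt_or_eq_of_le hread with hlt | he
            · exact absurd hnull (ih1 h hlt)
            · exact he
          subst hh
          refine ⟨fun i hi => ?_, fun i hi => ?_⟩
          · dsimp only at hi ⊢
            rw [Function.update_of_ne (by omega : i ≠ b.2)]
            exact ih1 i hi
          · dsimp only at hi ⊢
            rw [Function.update_of_ne (by omega : i ≠ b.2)]
            exact ih2 i hi
      | advance hfilled =>
          refine ⟨fun i hi => ?_, fun i hi => ?_⟩
          · rcases Nat.lt_succ_iff_lt_or_eq.mp hi with h | h
            · exact ih1 i h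
            · subst h; exact hfilled
          · exact ih2 i (by omega)
end

section
/- Suppose every successful Refresh on node v propagates into v all operations that were contained in v's children at the moment the Refresh read head (Lemma 4.8). Then for two consecutive terminating Refresh calls R1, R2 by the same process where both perform failed CAS operations, there exists a third Refresh R3 whose successful CAS occurs between R1's read and R2's failed CAS and whose read of head occurs after R1's read; consequently all operations contained in v's children when R1 began are contained in v when R2 terminates. -/
/-- The double-refresh lemma (Lemma 4.9), abstracted.  `contains t` is the
(monotone) set of operations contained in node `v` at time `t`, `childContains t`
the (monotone) set of operations contained in `v`'s children at time `t`, and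
`head` is `v`'s non-decreasing head counter.  `succ h r c` means some Refresh read
`head = h` at time `r` and performed a successful CAS on `blocks[h]` at time
`c ≥ r`; every successful Refresh propagates into `v` all operations contained in
`v`'s children at its read (Lemma 4.8).  Suppose a process performs two consecutive
Refreshes `R₁` (read at `r₁` obtaining `h₁`, failed CAS at `c₁`) and `R₂` (read at
`r₂` obtaining `h₂ > h₁`, failed CAS at `c₂`), and `R₂`'s CAS on `blocks[h₂]` fails
because of an earlier successful CAS on `blocks[h₂]`.  Then there is a Refresh `R₃`
whose successful CAS on `blocks[h₂]` occurs before `c₂` and whose read of `head`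
occurs no earlier than `r₁`; consequently all operations contained in `v`'s
children at time `r₁` are contained in `v` at time `c₂` (when `R₂` terminates). -/
theorem double_refresh {Op : Type}
    (contains childContains : ℕ → Set Op)
    (hmonoC : Monotone contains) (hmonoCh : Monotone childContains)
    (head : ℕ → ℕ) (hmonoH : Monotone head)
    (succ : ℕ → ℕ → ℕ → Prop)
    (hsuccRead : ∀ h r c, succ h r c → r ≤ c ∧ head r = h)
    (hsuccProp : ∀ h r c, succ h r c → childContains r ⊆ contains c)
    (r₁ c₁ r₂ c₂ h₁ h₂ : ℕ)
    (hr₁ : head r₁ = h₁) (hr₂ : head r₂ = h₂)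
    (h₁₂ : r₁ ≤ c₁) (h₂₃ : c₁ ≤ r₂) (h₃₄ : r₂ ≤ c₂)
    (hinc : h₁ < h₂)
    (hfail : ∃ r₃ c₃, succ h₂ r₃ c₃ ∧ c₃ < c₂) :
    (∃ r₃ c₃, succ h₂ r₃ c₃ ∧ c₃ < c₂ ∧ r₁ ≤ r₃) ∧
      childContains r₁ ⊆ contains c₂ := by
  obtain ⟨r₃, c₃, hs, hc⟩ := hfail
  obtain ⟨hrc, hhead⟩ := hsuccRead _ _ _ hs
  have hr13 : r₁ ≤ r₃ := by
    by_contra h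
    push_neg at h
    have := hmonoH h.le
    omega
  refine ⟨⟨r₃, c₃, hs, hc, hr13⟩, ?_⟩
  exact fun x hx => hmonoC hc.le (hsuccProp _ _ _ hs (hmonoCh hr13 hx))
end

section
/- Every block in the ordering tree contains at most c operations, where c is the maximum point contention of the execution, and consequently has at most c direct subblocks. -/
/-- Lemmas 4.11/5.3: each block contains at most `c` operations, where `c` is the
maximum point contention, and consequently has at most `c` direct subblocks.
Model: `Ops` is the set of all operations of the execution, each with invocation
time `inv` and termination time `term`; `c` bounds the number of operations in
progress at any instant.  The block `B ⊆ Ops` is created at time `tc`, after the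
invocation of every operation it contains and before the earliest termination of an
operation it contains (so every operation of `B` is in progress at `tc`).  The
direct subblocks `D` partition `B` into nonempty parts. -/
theorem block_size_at_most_contention {Op : Type} [DecidableEq Op]
    (Ops B : Finset Op) (hBsub : B ⊆ Ops)
    (inv term : Op → ℕ) (c tc : ℕ)
    (hc : ∀ τ : ℕ, (Ops.filter (fun op => inv op ≤ τ ∧ τ ≤ term op)).card ≤ c)
    (hinv : ∀ op ∈ B, inv op ≤ tc)
    (hterm : ∀ op ∈ B, tc ≤ term op)
    (D : Finset (Finset Op))
    (hcover : B = D.biUnion id)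
    (hne : ∀ d ∈ D, d.Nonempty)
    (hdisj : (D : Set (Finset Op)).PairwiseDisjoint id) :
    B.card ≤ c ∧ D.card ≤ c := by
  have hB : B.card ≤ c := by
    calc B.card ≤ (Ops.filter (fun op => inv op ≤ tc ∧ tc ≤ term op)).card := by
          apply Finset.card_le_card
          intro op hop
          exact Finset.mem_filter.2 ⟨hBsub hop, hinv op hop, hterm op hop⟩
      _ ≤ c := hc tc
  refine ⟨hB, le_trans ?_ hB⟩
  rw [hcover, Finset.card_biUnion (fun x hx y hy hxy => hdisj hx hy hxy)]
  calc D.card = ∑ _d ∈ D, 1 := by simp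
    _ ≤ ∑ d ∈ D, (id d).card := Finset.sum_le_sum fun d hd =>
        Finset.card_pos.2 (hne d hd)
end
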